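/- arXiv:2105.04330 — 2 statements merged into one kernel-verified Lean document; each statement's English description precedes it below -/
import Mathlib

section
/- Let m_r ≥ 2, λ₀, λ ∈ (−1,1), and σ², σ₀² > 0. If (m_r − 1 + λ)² σ₀² = σ² (m_r − 1 + λ₀)² and (m_s − 1 + λ)² σ₀² = σ² (m_s − 1 + λ₀)² for integers m_r ≠ m_s both ≥ 2, then λ = λ₀ and σ² = σ₀². -/
/-!
Each equation says that `σ²/σ₀²` is the square of the ratio `(m - 1 + λ)/(m - 1 + λ₀)`.
Comparing the two values of `m` eliminates the variances; as all four bases are positive the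
squares can be dropped, and cross-multiplying leaves `(m_r - m_s)(λ - λ₀) = 0`.
-/

section

variable {K : Type*} [Field K] [LinearOrder K] [IsStrictOrderedRing K]

theorem mul_eq_mul_of_sq_mul_eq_mul_sq {a b a₀ b₀ s s₀ : K} (hs₀ : s₀ ≠ 0)
    (ha : 0 ≤ a) (hb : 0 ≤ b) (ha₀ : 0 ≤ a₀) (hb₀ : 0 ≤ b₀)
    (h₁ : a ^ 2 * s₀ = s * a₀ ^ 2) (h₂ : b ^ 2 * s₀ = s * b₀ ^ 2) :
    a * b₀ = b * a₀ := by
  have hsq : (a * b₀) ^ 2 = (b * a₀) ^ 2 :=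
    mul_left_cancel₀ hs₀ (by linear_combination b₀ ^ 2 * h₁ - a₀ ^ 2 * h₂)
  exact (pow_left_inj₀ (mul_nonneg ha hb₀) (mul_nonneg hb ha₀) two_ne_zero).mp hsq

end

theorem eq_of_add_mul_add_eq_add_mul_add {R : Type*} [CommRing R] [NoZeroDivisors R]
    {c d x y : R} (hcd : c ≠ d) (h : (c + x) * (d + y) = (d + x) * (c + y)) : x = y := by
  have hprod : (c - d) * (x - y) = 0 := by linear_combination -h
  exact sub_eq_zero.mp ((mul_eq_zero.mp hprod).resolve_left (sub_ne_zero.mpr hcd))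

theorem natCast_sub_one_add_pos {m : ℕ} (hm : 2 ≤ m) {l : ℝ} (hl : -1 < l) :
    0 < (m : ℝ) - 1 + l := by
  have : (2 : ℝ) ≤ m := by exact_mod_cast hm
  linarith

theorem identification_within_variance_general (mr ms : ℕ) (hmr : 2 ≤ mr) (hms : 2 ≤ ms)
    (hne : mr ≠ ms) (lam lam0 : ℝ)
    (hlam : lam ∈ Set.Ioo (-1 : ℝ) 1) (hlam0 : lam0 ∈ Set.Ioo (-1 : ℝ) 1)
    (s2 s02 : ℝ) (hs02 : 0 < s02)
    (h1 : ((mr : ℝ) - 1 + lam) ^ 2 * s02 = s2 * ((mr : ℝ) - 1 + lam0) ^ 2)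
    (h2 : ((ms : ℝ) - 1 + lam) ^ 2 * s02 = s2 * ((ms : ℝ) - 1 + lam0) ^ 2) :
    lam = lam0 ∧ s2 = s02 := by
  have pos : ∀ {m : ℕ}, 2 ≤ m → ∀ {l : ℝ}, l ∈ Set.Ioo (-1 : ℝ) 1 → 0 < (m : ℝ) - 1 + l :=
    fun hm _ hl => natCast_sub_one_add_pos hm hl.1
  have hcross := mul_eq_mul_of_sq_mul_eq_mul_sq hs02.ne' (pos hmr hlam).le (pos hms hlam).le
    (pos hmr hlam0).le (pos hms hlam0).le h1 h2
  have hcd : (mr : ℝ) - 1 ≠ (ms : ℝ) - 1 := by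
    simpa only [ne_eq, sub_left_inj, Nat.cast_inj] using hne
  obtain rfl : lam = lam0 := eq_of_add_mul_add_eq_add_mul_add hcd hcross
  exact ⟨rfl, (mul_right_cancel₀ (pow_pos (pos hmr hlam) 2).ne' ((mul_comm _ _).trans h1)).symm⟩

theorem identification_within_variance (mr ms : ℕ) (hmr : 2 ≤ mr) (hms : 2 ≤ ms)
    (hne : mr ≠ ms) (lam lam0 : ℝ)
    (hlam : lam ∈ Set.Ioo (-1 : ℝ) 1) (hlam0 : lam0 ∈ Set.Ioo (-1 : ℝ) 1)
    (s2 s02 : ℝ) (hs2 : 0 < s2) (hs02 : 0 < s02)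
    (h1 : ((mr : ℝ) - 1 + lam) ^ 2 * s02 = s2 * ((mr : ℝ) - 1 + lam0) ^ 2)
    (h2 : ((ms : ℝ) - 1 + lam) ^ 2 * s02 = s2 * ((ms : ℝ) - 1 + lam0) ^ 2) :
    lam = lam0 ∧ s2 = s02 :=
  identification_within_variance_general mr ms hmr hms hne lam lam0 hlam hlam0 s2 s02 hs02 h1 h2
end

section
/- Let Y_r ∈ ℝ^m solve Y_r = λ W_m Y_r + α ι_m + ε_r with m ≥ 2, λ ∈ (−1,1), W_m = (1/(m−1))(ι_m ι_m' − I_m). Let ȳ = (1/m)ι_m'Y_r, ε̄ = (1/m)ι_m'ε_r, Ÿ_r = Y_r − ȳ ι_m, ε̈_r = ε_r − ε̄ ι_m. Then ȳ = (α + ε̄)/(1 − λ) and Ÿ_r = ((m−1)/(m−1+λ))·ε̈_r. -/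
/-!
Row `i` of the system reads `(1 + λ/(m-1)) Y_i = λ/(m-1) ∑_j Y_j + α + ε_i`: the same affine
equation for every `i`, up to a common constant. Averaging over `i` (and using `∑_j Y_j = m ȳ`)
gives `(1 - λ) ȳ = α + ε̄`; subtracting the average from row `i` cancels the common constant and
leaves `(1 + λ/(m-1)) (Y_i - ȳ) = ε_i - ε̄`.
-/

open Matrix

section Averaging

variable {K ι : Type*} [Field K] [CharZero K] [Fintype ι]

theorem mul_average_eq_of_forall_mul_eq [Nonempty ι] {a c : K} {Y ε : ι → K}
    (h : ∀ i, a * Y i = c + ε i) :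
    a * (1 / (Fintype.card ι : K) * ∑ i, Y i) = c + 1 / (Fintype.card ι : K) * ∑ i, ε i := by
  have hcard : (Fintype.card ι : K) ≠ 0 := by exact_mod_cast Fintype.card_ne_zero
  have hsum : a * ∑ i, Y i = Fintype.card ι * c + ∑ i, ε i := by
    simp only [Finset.mul_sum, h, Finset.sum_add_distrib, Finset.sum_const, Finset.card_univ,
      nsmul_eq_mul]
  field_simp
  linear_combination hsum

theorem mul_sub_average_eq_of_forall_mul_eq {a c : K} {Y ε : ι → K}
    (h : ∀ i, a * Y i = c + ε i) (i : ι) :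
    a * (Y i - 1 / (Fintype.card ι : K) * ∑ j, Y j) =
      ε i - 1 / (Fintype.card ι : K) * ∑ j, ε j := by
  have : Nonempty ι := ⟨i⟩
  linear_combination h i - mul_average_eq_of_forall_mul_eq h

end Averaging

theorem of_one_sub_one_mulVec {R n : Type*} [Ring R] [Fintype n] [DecidableEq n] (v : n → R) :
    ((of fun _ _ => (1 : R)) - 1) *ᵥ v = fun i => ∑ j, v j - v i := by
  rw [sub_mulVec, one_mulVec]
  ext i
  simp [mulVec, dotProduct]

theorem mul_eq_of_eq_smul_of_one_sub_one_mulVec {K ι : Type*} [Field K] [Fintype ι]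
    [DecidableEq ι] {d lam α : K} {Y ε : ι → K}
    (hY : Y = lam • ((1 / d) • ((of fun _ _ => (1 : K)) - 1)) *ᵥ Y + (fun _ => α) + ε) (i : ι) :
    (1 + lam / d) * Y i = (lam / d * ∑ j, Y j + α) + ε i := by
  have hi := congrFun hY i
  simp only [smul_mulVec, of_one_sub_one_mulVec, Pi.add_apply, Pi.smul_apply,
    smul_eq_mul] at hi
  linear_combination hi

theorem reduced_form_decomposition (m : ℕ) (hm : 2 ≤ m) (lam : ℝ)
    (hlam : lam ∈ Set.Ioo (-1 : ℝ) 1)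
    (J : Matrix (Fin m) (Fin m) ℝ) (hJ : J = Matrix.of fun _ _ => (1 : ℝ))
    (W : Matrix (Fin m) (Fin m) ℝ)
    (hW : W = (1 / ((m : ℝ) - 1)) • (J - 1))
    (α : ℝ) (Y ε : Fin m → ℝ)
    (hY : Y = lam • W.mulVec Y + (fun _ => α) + ε)
    (ybar εbar : ℝ)
    (hybar : ybar = (1 / (m : ℝ)) * ∑ i, Y i)
    (hεbar : εbar = (1 / (m : ℝ)) * ∑ i, ε i) :
    ybar = (α + εbar) / (1 - lam) ∧
    ∀ i, Y i - ybar = (((m : ℝ) - 1) / ((m : ℝ) - 1 + lam)) * (ε i - εbar) := by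
  obtain ⟨hlam₁, hlam₂⟩ := hlam
  subst hJ hW
  have : NeZero m := ⟨by omega⟩
  have hm_real : (2 : ℝ) ≤ m := by exact_mod_cast hm
  have hrow := mul_eq_of_eq_smul_of_one_sub_one_mulVec hY
  have hmean := mul_average_eq_of_forall_mul_eq hrow
  have hdev := mul_sub_average_eq_of_forall_mul_eq hrow
  simp only [Fintype.card_fin, ← hybar, ← hεbar] at hmean hdev
  have hsum : ∑ j, Y j = m * ybar := by
    rw [hybar]
    field_simp
  have hd : (m : ℝ) - 1 ≠ 0 := by linarith
  refine ⟨?_, fun i => ?_⟩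
  · rw [eq_div_iff (by linarith)]
    rw [hsum] at hmean
    field_simp at hmean
    refine mul_left_cancel₀ hd ?_
    linear_combination hmean
  · rw [div_mul_eq_mul_div, eq_div_iff (by linarith)]
    field_simp at hdev
    linear_combination hdev i
end
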